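/- arXiv:2302.04724 — 2 statements merged into one kernel-verified Lean document; each statement's English description precedes it below -/
import Mathlib

section
/- Let A and B be positive bounded self-adjoint operators on a Hilbert space and 0 < α < 1. Then ‖A^α B^α‖ ≤ ‖AB‖^α (operator norms), provided AB is a positive operator (e.g., A and B commute or the Cordes inequality setting holds). -/
open scoped NNReal

set_option synthInstance.maxHeartbeats 1000000
set_option maxHeartbeats 1000000
set_option linter.unusedVariables false
set_option linter.unnecessarySimpa false

section CordesAux

lemma cordes_scalar_est {M x q α : ℝ} (hM : 1 ≤ M) (hx0 : 0 ≤ x) (hxM : x ≤ M)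
    (hα : 0 < α) (hαq : α ≤ q) (hq1 : q ≤ 1) :
    |x ^ q - x ^ α| ≤ (q - α) * (1 / α + M * M * Real.log M) := by
  have hδ : 0 ≤ q - α := by linarith
  have hlogM : 0 ≤ Real.log M := Real.log_nonneg hM
  have hC : 0 ≤ 1 / α + M * M * Real.log M := by positivity
  rcases eq_or_lt_of_le hx0 with h0 | hxpos
  · rw [← h0, Real.zero_rpow (by linarith : q ≠ 0), Real.zero_rpow hα.ne', sub_zero, abs_zero]
    exact mul_nonneg hδ hC
  have hxq : x ^ q = x ^ α * x ^ (q - α) := by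
    rw [← Real.rpow_add hxpos]; ring_nf
  rcases le_or_gt x 1 with hx1 | hx1
  · -- x ≤ 1 case
    have hxδ1 : x ^ (q - α) ≤ 1 := Real.rpow_le_one hx0 hx1 hδ
    have hxα0 : 0 < x ^ α := Real.rpow_pos_of_pos hxpos α
    have habs : |x ^ q - x ^ α| = x ^ α * (1 - x ^ (q - α)) := by
      rw [abs_of_nonpos (by nlinarith [hxq]), hxq]; ring
    rw [habs]
    have h1 : 1 - x ^ (q - α) ≤ (q - α) * (-Real.log x) := by
      have := Real.log_le_sub_one_of_pos (Real.rpow_pos_of_pos hxpos (q - α))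
      rw [Real.log_rpow hxpos] at this
      nlinarith
    have h2 : x ^ α * (-Real.log x) ≤ 1 / α := by
      set y := x ^ α with hy
      have hy0 : 0 < y := hxα0
      have hylog : Real.log y = α * Real.log x := Real.log_rpow hxpos α
      have h3 : Real.log y⁻¹ ≤ y⁻¹ - 1 := Real.log_le_sub_one_of_pos (by positivity)
      rw [Real.log_inv] at h3
      -- y * (-log y) ≤ 1 - y ≤ 1
      have h4 : y * (-Real.log y) ≤ 1 - y := by
        have := mul_le_mul_of_nonneg_left h3 hy0.le
        calc y * (-Real.log y) ≤ y * (y⁻¹ - 1) := this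
          _ = 1 - y := by field_simp
      have h5 : y * (-Real.log y) ≤ 1 := by linarith
      -- x^α * (-log x) = (1/α) * (y * (-log y))
      have h6 : x ^ α * (-Real.log x) = (1 / α) * (y * (-Real.log y)) := by
        rw [hylog]; field_simp; ring
      rw [h6]
      calc (1/α) * (y * (-Real.log y)) ≤ (1/α) * 1 := by
            apply mul_le_mul_of_nonneg_left h5 (by positivity)
        _ = 1/α := mul_one _
    calc x ^ α * (1 - x ^ (q - α)) ≤ x ^ α * ((q - α) * (-Real.log x)) :=
          mul_le_mul_of_nonneg_left h1 hxα0.le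
      _ = (q - α) * (x ^ α * (-Real.log x)) := by ring
      _ ≤ (q - α) * (1 / α) := mul_le_mul_of_nonneg_left h2 hδ
      _ ≤ (q - α) * (1 / α + M * M * Real.log M) :=
          mul_le_mul_of_nonneg_left (le_add_of_nonneg_right (by positivity)) hδ
  · -- 1 < x ≤ M case
    have hxαq : x ^ α ≤ x ^ q := Real.rpow_le_rpow_of_exponent_le hx1.le hαq
    have habs : |x ^ q - x ^ α| = x ^ α * (x ^ (q - α) - 1) := by
      rw [abs_of_nonneg (by linarith), hxq]; ring
    rw [habs]
    have hxαM : x ^ α ≤ M := by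
      calc x ^ α ≤ M ^ α := Real.rpow_le_rpow hx0 hxM hα.le
        _ ≤ M ^ (1:ℝ) := Real.rpow_le_rpow_of_exponent_le hM (by linarith)
        _ = M := Real.rpow_one M
    have hMpos : (0:ℝ) < M := by linarith
    have hMδ : x ^ (q - α) ≤ M ^ (q - α) := Real.rpow_le_rpow hx0 hxM hδ
    have hMδM : M ^ (q - α) ≤ M := by
      calc M ^ (q - α) ≤ M ^ (1:ℝ) := Real.rpow_le_rpow_of_exponent_le hM (by linarith)
        _ = M := Real.rpow_one M
    have hexp : M ^ (q - α) - 1 ≤ (q - α) * Real.log M * M ^ (q - α) := by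
      set t := (q - α) * Real.log M with ht
      have ht0 : 0 ≤ t := mul_nonneg hδ hlogM
      have hMδexp : M ^ (q - α) = Real.exp t := by
        rw [Real.rpow_def_of_pos hMpos, ht]; ring_nf
      have h7 := Real.add_one_le_exp (-t)
      have hept : 0 < Real.exp t := Real.exp_pos t
      have h8 : Real.exp (-t) * Real.exp t = 1 := by
        rw [← Real.exp_add]; simp
      have h9 : Real.exp t - 1 ≤ t * Real.exp t := by
        nlinarith [mul_le_mul_of_nonneg_right h7 hept.le]
      rw [hMδexp]; linarith
    have hxδ0 : 0 ≤ x ^ (q - α) - 1 := by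
      have : (1:ℝ) = 1 ^ (q - α) := (Real.one_rpow _).symm
      nlinarith [Real.rpow_le_rpow (by norm_num : (0:ℝ) ≤ 1) hx1.le hδ]
    have hchain : x ^ (q - α) - 1 ≤ (q - α) * Real.log M * M := by
      nlinarith [mul_le_mul_of_nonneg_left hMδM (mul_nonneg hδ hlogM)]
    calc x ^ α * (x ^ (q - α) - 1) ≤ M * (x ^ (q - α) - 1) := by
          apply mul_le_mul_of_nonneg_right hxαM hxδ0
      _ ≤ M * ((q - α) * Real.log M * M) := mul_le_mul_of_nonneg_left hchain hMpos.le
      _ = (q - α) * (M * M * Real.log M) := by ring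
      _ ≤ (q - α) * (1 / α + M * M * Real.log M) :=
          mul_le_mul_of_nonneg_left (le_add_of_nonneg_left (by positivity)) hδ

variable {H : Type*} [NormedAddCommGroup H] [InnerProductSpace ℂ H] [CompleteSpace H]

lemma commute_cfc' (a b : H →L[ℂ] H) (hab : Commute a b) (f : ℝ → ℝ) :
    Commute (cfc f a) b := by
  by_cases ha : IsSelfAdjoint a
  · by_cases hf : ContinuousOn f (spectrum ℝ a)
    · rw [cfc_apply f a ha hf]
      suffices h : ∀ g : C(spectrum ℝ a, ℝ), Commute (cfcHom ha g) b from h _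
      intro g
      have hmul : ∀ x y : C(spectrum ℝ a, ℝ), Commute (cfcHom ha x) b →
          Commute (cfcHom ha y) b → Commute (cfcHom ha (x * y)) b := by
        intro x y hx hy
        rw [map_mul]
        exact hx.mul_left hy
      have hadd : ∀ x y : C(spectrum ℝ a, ℝ), Commute (cfcHom ha x) b →
          Commute (cfcHom ha y) b → Commute (cfcHom ha (x + y)) b := by
        intro x y hx hy
        rw [map_add]
        exact hx.add_left hy
      have halg : ∀ r : ℝ, Commute (cfcHom ha (algebraMap ℝ C(spectrum ℝ a, ℝ) r)) b := by
        intro r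
        rw [AlgHomClass.commutes]
        exact Commute.symm (Algebra.commute_algebraMap_right r b)
      let S : Subalgebra ℝ C(spectrum ℝ a, ℝ) :=
        { carrier := {g | Commute (cfcHom ha g) b}
          mul_mem' := fun hx hy => hmul _ _ hx hy
          add_mem' := fun hx hy => hadd _ _ hx hy
          algebraMap_mem' := halg }
      have hS_closed : IsClosed (S : Set C(spectrum ℝ a, ℝ)) := by
        have hc : Continuous (fun g : C(spectrum ℝ a, ℝ) => cfcHom ha (R := ℝ) g) :=
          cfcHom_continuous ha
        exact isClosed_eq (hc.mul continuous_const) (continuous_const.mul hc)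
      have hgen : (Polynomial.toContinuousMapOnAlgHom (spectrum ℝ a)) Polynomial.X ∈ S := by
        have hx : (Polynomial.toContinuousMapOnAlgHom (spectrum ℝ a)) Polynomial.X
            = (ContinuousMap.id ℝ).restrict (spectrum ℝ a) := by
          ext x; simp
        show Commute _ b
        rw [hx, cfcHom_id ha]
        exact hab
      have h1 : polynomialFunctions (spectrum ℝ a) ≤ S := by
        rw [polynomialFunctions.eq_adjoin_X]
        exact Algebra.adjoin_le (by simpa using hgen)
      have h2 : (⊤ : Subalgebra ℝ C(spectrum ℝ a, ℝ)) ≤ S := by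
        rw [← polynomialFunctions.topologicalClosure (spectrum ℝ a)]
        exact Subalgebra.topologicalClosure_minimal h1 hS_closed
      exact h2 (Algebra.mem_top : g ∈ ⊤)
    · rw [cfc_apply_of_not_continuousOn a hf]; exact Commute.zero_left b
  · rw [cfc_apply_of_not_predicate a ha]; exact Commute.zero_left b

lemma commute_cfc_nn (a b : H →L[ℂ] H) (hab : Commute a b) (ha : 0 ≤ a) (f : ℝ≥0 → ℝ≥0) :
    Commute (cfc f a) b := by
  rw [cfc_nnreal_eq_real f a ha]
  exact commute_cfc' a b hab _

lemma commute_sqrt (a b : H →L[ℂ] H) (hab : Commute a b) (ha : 0 ≤ a) :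
    Commute (CFC.sqrt a) b := by
  rw [CFC.sqrt_eq_cfc]
  exact commute_cfc_nn a b hab ha _

lemma mul_nonneg_of_commute (a b : H →L[ℂ] H) (hab : Commute a b) (ha : 0 ≤ a) (hb : 0 ≤ b) :
    0 ≤ a * b := by
  have hs : Commute (CFC.sqrt a) b := commute_sqrt a b hab ha
  have hsa : star (CFC.sqrt a) = CFC.sqrt a :=
    (IsSelfAdjoint.of_nonneg (CFC.sqrt_nonneg _)).star_eq
  have key : a * b = star (CFC.sqrt a) * b * CFC.sqrt a := by
    rw [hsa]
    calc a * b = CFC.sqrt a * CFC.sqrt a * b := by rw [CFC.sqrt_mul_sqrt_self a ha]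
      _ = CFC.sqrt a * (CFC.sqrt a * b) := by rw [mul_assoc]
      _ = CFC.sqrt a * (b * CFC.sqrt a) := by rw [hs.eq]
      _ = CFC.sqrt a * b * CFC.sqrt a := by rw [mul_assoc]
  rw [key]
  exact star_left_conjugate_nonneg hb _

lemma sqrt_mul_comm (a b : H →L[ℂ] H) (hab : Commute a b) (ha : 0 ≤ a) (hb : 0 ≤ b) :
    CFC.sqrt (a * b) = CFC.sqrt a * CFC.sqrt b := by
  have h1 : Commute (CFC.sqrt a) b := commute_sqrt a b hab ha
  have h2 : Commute (CFC.sqrt b) (CFC.sqrt a) := commute_sqrt b (CFC.sqrt a) h1.symm hb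
  have hc : Commute (CFC.sqrt a) (CFC.sqrt b) := h2.symm
  refine CFC.sqrt_unique ?_ ?_
  · calc CFC.sqrt a * CFC.sqrt b * (CFC.sqrt a * CFC.sqrt b)
        = CFC.sqrt a * (CFC.sqrt b * CFC.sqrt a) * CFC.sqrt b := by
          simp only [mul_assoc]
      _ = CFC.sqrt a * (CFC.sqrt a * CFC.sqrt b) * CFC.sqrt b := by rw [h2.eq]
      _ = (CFC.sqrt a * CFC.sqrt a) * (CFC.sqrt b * CFC.sqrt b) := by
          simp only [mul_assoc]
      _ = a * b := by rw [CFC.sqrt_mul_sqrt_self a ha, CFC.sqrt_mul_sqrt_self b hb]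
  · exact mul_nonneg_of_commute _ _ hc (CFC.sqrt_nonneg _) (CFC.sqrt_nonneg _)

lemma sqrt_iter_nonneg (a : H →L[ℂ] H) (ha : 0 ≤ a) (n : ℕ) : 0 ≤ CFC.sqrt^[n] a := by
  induction n with
  | zero => simpa using ha
  | succ n ih => rw [Function.iterate_succ_apply']; exact CFC.sqrt_nonneg _

lemma sqrt_iter_commute (a b : H →L[ℂ] H) (hab : Commute a b) (ha : 0 ≤ a) (hb : 0 ≤ b)
    (n : ℕ) : Commute (CFC.sqrt^[n] a) (CFC.sqrt^[n] b) := by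
  induction n with
  | zero => simpa using hab
  | succ n ih =>
    rw [Function.iterate_succ_apply', Function.iterate_succ_apply']
    have h1 : Commute (CFC.sqrt (CFC.sqrt^[n] a)) (CFC.sqrt^[n] b) :=
      commute_sqrt _ _ ih (sqrt_iter_nonneg a ha n)
    exact (commute_sqrt _ _ h1.symm (sqrt_iter_nonneg b hb n)).symm

lemma sqrt_iter_mul (a b : H →L[ℂ] H) (hab : Commute a b) (ha : 0 ≤ a) (hb : 0 ≤ b) (n : ℕ) :
    CFC.sqrt^[n] (a * b) = CFC.sqrt^[n] a * CFC.sqrt^[n] b := by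
  induction n with
  | zero => simp
  | succ n ih =>
    rw [Function.iterate_succ_apply', Function.iterate_succ_apply',
      Function.iterate_succ_apply', ih]
    exact sqrt_mul_comm _ _ (sqrt_iter_commute a b hab ha hb n)
      (sqrt_iter_nonneg a ha n) (sqrt_iter_nonneg b hb n)

lemma pow_nonneg' (a : H →L[ℂ] H) (ha : 0 ≤ a) (m : ℕ) : 0 ≤ a ^ m := by
  induction m with
  | zero => simpa using star_mul_self_nonneg (1 : H →L[ℂ] H)
  | succ m ih =>
    rw [pow_succ]
    exact mul_nonneg_of_commute _ _ ((Commute.refl a).pow_left m) ih ha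

lemma sqrt_iter_pow_eq_nnrpow (a : H →L[ℂ] H) (ha : 0 ≤ a) (n m : ℕ) (hm : 0 < m) :
    CFC.sqrt^[n] (a ^ m) = CFC.nnrpow a ((m : ℝ≥0) / 2 ^ n) := by
  induction n with
  | zero =>
    simp only [Function.iterate_zero_apply, pow_zero, div_one]
    rw [CFC.nnrpow_eq_pow, CFC.nnrpow_eq_rpow (by exact_mod_cast hm)]
    rw [show ((m : ℝ≥0) : ℝ) = (m : ℝ) by push_cast; ring]
    exact (CFC.rpow_natCast a m ha).symm
  | succ n ih =>
    rw [Function.iterate_succ_apply', ih, CFC.nnrpow_eq_pow, CFC.nnrpow_eq_pow,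
      CFC.sqrt_nnrpow (A := H →L[ℂ] H)]
    congr 1
    rw [div_div, ← pow_succ]

lemma dyadic_identity (a b : H →L[ℂ] H) (hab : Commute a b) (ha : 0 ≤ a) (hb : 0 ≤ b)
    (n m : ℕ) (hm : 0 < m) :
    CFC.nnrpow (a * b) ((m : ℝ≥0) / 2 ^ n)
      = CFC.nnrpow a ((m : ℝ≥0) / 2 ^ n) * CFC.nnrpow b ((m : ℝ≥0) / 2 ^ n) := by
  rw [← sqrt_iter_pow_eq_nnrpow (a * b) (mul_nonneg_of_commute a b hab ha hb) n m hm,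
    ← sqrt_iter_pow_eq_nnrpow a ha n m hm, ← sqrt_iter_pow_eq_nnrpow b hb n m hm,
    hab.mul_pow]
  exact sqrt_iter_mul _ _ (hab.pow_pow m m) (pow_nonneg' a ha m) (pow_nonneg' b hb m) n

lemma nnrpow_eq_cfc_real (a : H →L[ℂ] H) (ha : 0 ≤ a) (q : ℝ≥0) (hq : 0 < q) :
    CFC.nnrpow a q = cfc (fun x : ℝ => x ^ (q : ℝ)) a := by
  rw [CFC.nnrpow_eq_pow, CFC.nnrpow_eq_rpow hq, CFC.rpow_def,
    cfc_nnreal_eq_real _ a ha]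
  apply cfc_congr
  intro x hx
  have hx0 : 0 ≤ x := spectrum_nonneg_of_nonneg ha hx
  simp only [NNReal.coe_rpow, Real.coe_toNNReal x hx0]

lemma rpow_continuousOn (r : ℝ) (hr : 0 < r) (s : Set ℝ) :
    ContinuousOn (fun x : ℝ => x ^ r) s :=
  fun x _ => (Real.continuousAt_rpow_const x r (Or.inr hr.le)).continuousWithinAt

lemma norm_cfc_rpow_le [Nontrivial H] (a : H →L[ℂ] H) (ha : 0 ≤ a) (r : ℝ) (hr : 0 < r) :
    ‖cfc (fun x : ℝ => x ^ r) a‖ ≤ ‖a‖ ^ r := by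
  apply norm_cfc_le (Real.rpow_nonneg (norm_nonneg a) r)
  intro x hx
  have hx0 : 0 ≤ x := spectrum_nonneg_of_nonneg ha hx
  have hx1 : x ≤ ‖a‖ := by
    have := spectrum.norm_le_norm_of_mem hx
    rwa [Real.norm_eq_abs, abs_of_nonneg hx0] at this
  rw [Real.norm_eq_abs, abs_of_nonneg (Real.rpow_nonneg hx0 r)]
  exact Real.rpow_le_rpow hx0 hx1 hr.le

lemma norm_cfc_rpow_diff_le [Nontrivial H] (a : H →L[ℂ] H) (ha : 0 ≤ a) {M q α : ℝ}
    (hM : 1 ≤ M) (haM : ‖a‖ ≤ M) (hα : 0 < α) (hαq : α ≤ q) (hq1 : q ≤ 1) :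
    ‖cfc (fun x : ℝ => x ^ q) a - cfc (fun x : ℝ => x ^ α) a‖
      ≤ (q - α) * (1 / α + M * M * Real.log M) := by
  have hsa : IsSelfAdjoint a := .of_nonneg ha
  rw [← cfc_sub (fun x : ℝ => x ^ q) (fun x : ℝ => x ^ α) a
    (rpow_continuousOn q (by linarith) _) (rpow_continuousOn α hα _)]
  apply norm_cfc_le
  · have hlogM : 0 ≤ Real.log M := Real.log_nonneg hM
    have : 0 ≤ q - α := by linarith
    positivity
  · intro x hx
    have hx0 : 0 ≤ x := spectrum_nonneg_of_nonneg ha hx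
    have hx1 : x ≤ M := by
      have := spectrum.norm_le_norm_of_mem hx
      rw [Real.norm_eq_abs, abs_of_nonneg hx0] at this
      linarith
    rw [Real.norm_eq_abs]
    exact cordes_scalar_est hM hx0 hx1 hα hαq hq1

end CordesAux

/-- Cordes inequality: For positive bounded self-adjoint operators `A`, `B` on a
Hilbert space and `0 < α < 1`, with `A^α`, `B^α` defined via the continuous functional
calculus, provided `A B` is positive, `‖A^α B^α‖ ≤ ‖A B‖^α`. -/
theorem stmt9 {H : Type*} [NormedAddCommGroup H] [InnerProductSpace ℂ H] [CompleteSpace H]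
    (A B : H →L[ℂ] H) (hA : A.IsPositive) (hB : B.IsPositive)
    (α : ℝ) (h0 : 0 < α) (h1 : α < 1)
    (hAB : (A ∘L B).IsPositive) :
    ‖cfc (fun x : ℝ => x ^ α) A ∘L cfc (fun x : ℝ => x ^ α) B‖ ≤ ‖A ∘L B‖ ^ α := by
  have hA' : 0 ≤ A := A.nonneg_iff_isPositive.mpr hA
  have hB' : 0 ≤ B := B.nonneg_iff_isPositive.mpr hB
  have hAB' : 0 ≤ A * B := (A * B).nonneg_iff_isPositive.mpr hAB
  have hcomm : Commute A B := by
    have h1' : star (A * B) = A * B := (IsSelfAdjoint.of_nonneg hAB').star_eq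
    have h2' : star (A * B) = B * A := by
      rw [star_mul, (IsSelfAdjoint.of_nonneg hA').star_eq, (IsSelfAdjoint.of_nonneg hB').star_eq]
    exact (h1'.symm.trans h2')
  rcases subsingleton_or_nontrivial H with hH | hH
  · have hall : ∀ x y : H →L[ℂ] H, x = y := fun x y =>
      ContinuousLinearMap.ext fun v => Subsingleton.elim _ _
    rw [show cfc (fun x : ℝ => x ^ α) A ∘L cfc (fun x : ℝ => x ^ α) B = 0 from hall _ _,
      show A ∘L B = 0 from hall _ _]
    simp [Real.zero_rpow h0.ne']
  · show ‖cfc (fun x : ℝ => x ^ α) A * cfc (fun x : ℝ => x ^ α) B‖ ≤ ‖A * B‖ ^ α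
    set M : ℝ := max (max ‖A‖ ‖B‖) (max ‖A * B‖ 1) with hMdef
    have hM1 : 1 ≤ M := le_max_of_le_right (le_max_right _ _)
    have hMA : ‖A‖ ≤ M := le_max_of_le_left (le_max_left _ _)
    have hMB : ‖B‖ ≤ M := le_max_of_le_left (le_max_right _ _)
    have hMAB : ‖A * B‖ ≤ M := le_max_of_le_right (le_max_left _ _)
    have hlogM : 0 ≤ Real.log M := Real.log_nonneg hM1
    set C : ℝ := 1 / α + M * M * Real.log M with hCdef
    have hC0 : 0 < C := by positivity
    apply le_of_forall_pos_le_add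
    intro ε hε
    set D : ℝ := 2 * M * C + C with hDdef
    have hD0 : 0 < D := by positivity
    set δ₀ : ℝ := min (ε / (D + 1)) (1 - α) with hδ₀def
    have hδ₀pos : 0 < δ₀ := lt_min (by positivity) (by linarith)
    obtain ⟨n, hn⟩ := exists_pow_lt_of_lt_one hδ₀pos (by norm_num : (1:ℝ)/2 < 1)
    have h2n : (0:ℝ) < 2 ^ n := by positivity
    set m : ℕ := ⌈α * 2 ^ n⌉₊ with hmdef
    have hm0 : 0 < m := Nat.ceil_pos.mpr (by positivity)
    set q : ℝ := (m : ℝ) / 2 ^ n with hqdef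
    have hαq : α ≤ q := by
      rw [hqdef, le_div_iff₀ h2n]
      exact Nat.le_ceil _
    have hqα : q - α < δ₀ := by
      have hceil : (m : ℝ) < α * 2 ^ n + 1 := Nat.ceil_lt_add_one (by positivity)
      have h12 : ((1:ℝ)/2) ^ n = 1 / 2 ^ n := by rw [div_pow, one_pow]
      have : q < α + 1 / 2 ^ n := by
        rw [hqdef, div_lt_iff₀ h2n]
        have h2n' : (1 / 2 ^ n : ℝ) * 2 ^ n = 1 := by field_simp
        nlinarith
      nlinarith [hn, h12]
    have hq1 : q ≤ 1 := by
      rw [hqdef, div_le_one h2n]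
      have hc : m ≤ 2 ^ n := Nat.ceil_le.mpr (by push_cast; nlinarith)
      exact_mod_cast hc
    have hq0 : 0 < q := lt_of_lt_of_le h0 hαq
    set q' : ℝ≥0 := (m : ℝ≥0) / 2 ^ n with hq'def
    have hq'c : (q' : ℝ) = q := by rw [hq'def, hqdef]; push_cast; ring
    have hq'0 : 0 < q' := by
      have : (0:ℝ) < (q' : ℝ) := hq'c ▸ hq0
      exact_mod_cast this
    have key : cfc (fun x : ℝ => x ^ q) A * cfc (fun x : ℝ => x ^ q) B
        = cfc (fun x : ℝ => x ^ q) (A * B) := by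
      rw [← hq'c, ← nnrpow_eq_cfc_real A hA' q' hq'0, ← nnrpow_eq_cfc_real B hB' q' hq'0,
        ← nnrpow_eq_cfc_real (A * B) hAB' q' hq'0, hq'def]
      exact (dyadic_identity A B hcomm hA' hB' n m hm0).symm
    have normM : ∀ (a : H →L[ℂ] H), 0 ≤ a → ‖a‖ ≤ M → ∀ r : ℝ, 0 < r → r ≤ 1 →
        ‖cfc (fun x : ℝ => x ^ r) a‖ ≤ M := by
      intro a ha haM r hr hr1
      calc ‖cfc (fun x : ℝ => x ^ r) a‖ ≤ ‖a‖ ^ r := norm_cfc_rpow_le a ha r hr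
        _ ≤ M ^ r := Real.rpow_le_rpow (norm_nonneg a) haM hr.le
        _ ≤ M ^ (1:ℝ) := Real.rpow_le_rpow_of_exponent_le hM1 hr1
        _ = M := Real.rpow_one M
    have hRαA : ‖cfc (fun x : ℝ => x ^ α) A‖ ≤ M := normM A hA' hMA α h0 h1.le
    have hRαB : ‖cfc (fun x : ℝ => x ^ α) B‖ ≤ M := normM B hB' hMB α h0 h1.le
    have hRqA : ‖cfc (fun x : ℝ => x ^ q) A‖ ≤ M := normM A hA' hMA q hq0 hq1
    have hdA : ‖cfc (fun x : ℝ => x ^ q) A - cfc (fun x : ℝ => x ^ α) A‖ ≤ (q - α) * C :=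
      norm_cfc_rpow_diff_le A hA' hM1 hMA h0 hαq hq1
    have hdB : ‖cfc (fun x : ℝ => x ^ q) B - cfc (fun x : ℝ => x ^ α) B‖ ≤ (q - α) * C :=
      norm_cfc_rpow_diff_le B hB' hM1 hMB h0 hαq hq1
    set RαA := cfc (fun x : ℝ => x ^ α) A
    set RαB := cfc (fun x : ℝ => x ^ α) B
    set RqA := cfc (fun x : ℝ => x ^ q) A
    set RqB := cfc (fun x : ℝ => x ^ q) B
    have hsplit : RαA * RαB - RqA * RqB = (RαA - RqA) * RαB + RqA * (RαB - RqB) := by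
      noncomm_ring
    have hqd : 0 ≤ q - α := by linarith
    have hprod : ‖RαA * RαB - RqA * RqB‖ ≤ (q - α) * C * M + M * ((q - α) * C) := by
      rw [hsplit]
      refine (norm_add_le _ _).trans (add_le_add ?_ ?_)
      · refine (norm_mul_le _ _).trans ?_
        have h1' : ‖RαA - RqA‖ ≤ (q - α) * C := by rw [norm_sub_rev]; exact hdA
        exact mul_le_mul h1' hRαB (norm_nonneg _) (mul_nonneg hqd hC0.le)
      · refine (norm_mul_le _ _).trans ?_
        have h2' : ‖RαB - RqB‖ ≤ (q - α) * C := by rw [norm_sub_rev]; exact hdB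
        exact mul_le_mul hRqA h2' (norm_nonneg _) (by linarith)
    have hABq : ‖cfc (fun x : ℝ => x ^ q) (A * B)‖ ≤ ‖A * B‖ ^ q :=
      norm_cfc_rpow_le (A * B) hAB' q hq0
    rw [← key] at hABq
    have hscalar : ‖A * B‖ ^ q ≤ ‖A * B‖ ^ α + (q - α) * C := by
      have h := cordes_scalar_est hM1 (norm_nonneg (A * B)) hMAB h0 hαq hq1
      have h2 := (abs_le.mp h).2
      rw [← hCdef] at h2
      linarith
    have hε' : δ₀ * (D + 1) ≤ ε := by
      have := min_le_left (ε / (D + 1)) (1 - α)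
      rw [← le_div_iff₀ (by positivity)]
      exact this
    have hfinal : (q - α) * C + ((q - α) * C * M + M * ((q - α) * C)) ≤ ε := by
      have hqd : 0 ≤ q - α := by linarith
      have h2 : (q - α) * D ≤ δ₀ * D := mul_le_mul_of_nonneg_right hqα.le hD0.le
      have h3 : δ₀ * D ≤ ε - δ₀ := by nlinarith
      have h4 : (q - α) * C + ((q - α) * C * M + M * ((q - α) * C)) = (q - α) * D := by
        rw [hDdef]; ring
      linarith
    calc ‖RαA * RαB‖ ≤ ‖RqA * RqB‖ + ‖RαA * RαB - RqA * RqB‖ := by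
          have := norm_sub_norm_le (RαA * RαB) (RqA * RqB)
          linarith [abs_le.mp (abs_norm_sub_norm_le (RαA * RαB) (RqA * RqB))]
      _ ≤ ‖A * B‖ ^ q + ((q - α) * C * M + M * ((q - α) * C)) := by
          exact add_le_add hABq hprod
      _ ≤ ‖A * B‖ ^ α + ((q - α) * C + ((q - α) * C * M + M * ((q - α) * C))) := by
          linarith
      _ ≤ ‖A * B‖ ^ α + ε := by linarith
end

section
/- Let T and T_N be positive self-adjoint bounded operators on a Hilbert space H and λ > 0. Then ‖(T + λI)(T_N + λI)^{-1}‖ ≤ (1/λ)‖(T + λI)^{-1/2}(T − T_N)‖² + (1/√λ)‖(T + λI)^{-1/2}(T − T_N)‖ + 1, where ‖·‖ denotes the operator norm on H. -/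
open ContinuousLinearMap
open RealInnerProductSpace

open ContinuousLinearMap in
lemma aux_lower12 {H : Type*} [NormedAddCommGroup H] [InnerProductSpace ℝ H] [CompleteSpace H]
    (P : H →L[ℝ] H) (hP : P.IsPositive) (lam : ℝ) (hlam : 0 < lam) (x : H) :
    lam * ‖x‖ ≤ ‖(P + lam • (1 : H →L[ℝ] H)) x‖ := by
  rcases eq_or_ne x 0 with rfl | hx
  · simp
  have h0 : (0 : ℝ) ≤ ⟪P x, x⟫ := hP.inner_nonneg_left x
  have h1 : lam * ‖x‖ ^ 2 ≤ ⟪(P + lam • (1 : H →L[ℝ] H)) x, x⟫ := by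
    rw [add_apply, inner_add_left, smul_apply, ContinuousLinearMap.one_apply, real_inner_smul_left,
      real_inner_self_eq_norm_sq]
    linarith
  have h2 : ⟪(P + lam • (1 : H →L[ℝ] H)) x, x⟫ ≤ ‖(P + lam • (1 : H →L[ℝ] H)) x‖ * ‖x‖ :=
    real_inner_le_norm _ _
  have hxpos : 0 < ‖x‖ := norm_pos_iff.mpr hx
  nlinarith [h1, h2]

/-- inverse norm bound -/
lemma aux_inv12 {H : Type*} [NormedAddCommGroup H] [InnerProductSpace ℝ H] [CompleteSpace H]
    (P : H →L[ℝ] H) (hP : P.IsPositive) (lam : ℝ) (hlam : 0 < lam)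
    (Q : H →L[ℝ] H) (hQ : (P + lam • (1 : H →L[ℝ] H)) ∘L Q = 1) :
    ‖Q‖ ≤ 1 / lam := by
  apply ContinuousLinearMap.opNorm_le_bound _ (by positivity)
  intro y
  have := aux_lower12 P hP lam hlam (Q y)
  have hy : (P + lam • (1 : H →L[ℝ] H)) (Q y) = y := by
    have := congrArg (fun f => f y) hQ
    simpa using this
  rw [hy] at this
  rw [div_mul_eq_mul_div, le_div_iff₀ hlam]
  linarith


/-- For positive self-adjoint bounded operators `T`, `T_N` on a Hilbert space
and `λ > 0`, with `R_N = (T_N + λI)⁻¹` and `S = (T + λI)^{-1/2}` (positive square root of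
`(T + λI)⁻¹`), one has
`‖(T + λI)(T_N + λI)⁻¹‖ ≤ (1/λ)‖S(T − T_N)‖² + (1/√λ)‖S(T − T_N)‖ + 1`. -/
theorem stmt12 {H : Type*} [NormedAddCommGroup H] [InnerProductSpace ℝ H] [CompleteSpace H]
    (T TN : H →L[ℝ] H) (hT : T.IsPositive) (hTN : TN.IsPositive)
    (lam : ℝ) (hlam : 0 < lam)
    (RN : H →L[ℝ] H)
    (hRN : (TN + lam • (1 : H →L[ℝ] H)) ∘L RN = 1)
    (hRN' : RN ∘L (TN + lam • (1 : H →L[ℝ] H)) = 1)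
    (R : H →L[ℝ] H)
    (hR : (T + lam • (1 : H →L[ℝ] H)) ∘L R = 1)
    (hR' : R ∘L (T + lam • (1 : H →L[ℝ] H)) = 1)
    (S : H →L[ℝ] H) (hS : S.IsPositive) (hSR : S ∘L S = R) :
    ‖(T + lam • (1 : H →L[ℝ] H)) ∘L RN‖ ≤
      (1 / lam) * ‖S ∘L (T - TN)‖ ^ 2 + (1 / Real.sqrt lam) * ‖S ∘L (T - TN)‖ + 1 := by
  set B := T + lam • (1 : H →L[ℝ] H) with hB
  set A := TN + lam • (1 : H →L[ℝ] H) with hA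
  set D := T - TN with hD
  -- multiplicative versions
  have hR'm : R * B = 1 := hR'
  have hAm : A * RN = 1 := hRN
  have hBAD : B = A + D := by rw [hB, hA, hD]; abel
  -- key identity
  have h1 : B * RN = 1 + D * RN := by rw [hBAD, add_mul, hAm]
  have h2 : D * RN = D * R + D * R * (D * RN) := by
    have h3 : D * R * (B * RN) = D * RN := by
      rw [mul_assoc D R, ← mul_assoc R B, hR'm, one_mul]
    calc D * RN = D * R * (B * RN) := h3.symm
      _ = D * R * (1 + D * RN) := by rw [h1]
      _ = D * R + D * R * (D * RN) := by rw [mul_add, mul_one]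
  have key : B ∘L RN = 1 + D ∘L R + (D ∘L R) ∘L (D ∘L RN) := by
    show B * RN = 1 + D * R + (D * R) * (D * RN)
    rw [h1]
    nth_rewrite 1 [h2]
    rw [add_assoc]
  -- norm bounds
  have hRNn : ‖RN‖ ≤ 1 / lam := aux_inv12 TN hTN lam hlam RN hRN
  have hRn : ‖R‖ ≤ 1 / lam := aux_inv12 T hT lam hlam R hR
  have hSadj : ContinuousLinearMap.adjoint S = S := by
    rw [← ContinuousLinearMap.star_eq_adjoint]; exact hS.isSelfAdjoint
  have hSS : ‖S‖ * ‖S‖ = ‖R‖ := by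
    calc ‖S‖ * ‖S‖ = ‖ContinuousLinearMap.adjoint S ∘L S‖ :=
          (ContinuousLinearMap.norm_adjoint_comp_self S).symm
      _ = ‖S ∘L S‖ := by rw [hSadj]
      _ = ‖R‖ := by rw [hSR]
  have hSn : ‖S‖ ≤ 1 / Real.sqrt lam := by
    have h4 : ‖S‖ = Real.sqrt ‖R‖ := by
      rw [← hSS, Real.sqrt_mul_self (norm_nonneg S)]
    rw [h4]
    calc Real.sqrt ‖R‖ ≤ Real.sqrt (1 / lam) := Real.sqrt_le_sqrt hRn
      _ = 1 / Real.sqrt lam := by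
          rw [one_div, one_div, Real.sqrt_inv]
  have hTadj : ContinuousLinearMap.adjoint T = T := by
    rw [← ContinuousLinearMap.star_eq_adjoint]; exact hT.isSelfAdjoint
  have hTNadj : ContinuousLinearMap.adjoint TN = TN := by
    rw [← ContinuousLinearMap.star_eq_adjoint]; exact hTN.isSelfAdjoint
  have hDadj : ContinuousLinearMap.adjoint D = D := by
    rw [hD, map_sub, hTadj, hTNadj]
  have hDS : ‖D ∘L S‖ = ‖S ∘L D‖ := by
    have : ContinuousLinearMap.adjoint (S ∘L D) = D ∘L S := by
      rw [ContinuousLinearMap.adjoint_comp, hSadj, hDadj]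
    rw [← this]
    exact (ContinuousLinearMap.adjoint : (H →L[ℝ] H) ≃ₗᵢ⋆[ℝ] (H →L[ℝ] H)).norm_map _
  set a := ‖S ∘L D‖ with ha
  have ha0 : 0 ≤ a := norm_nonneg _
  -- bounds on pieces
  have hDR : ‖D ∘L R‖ ≤ a * (1 / Real.sqrt lam) := by
    have : D ∘L R = (D ∘L S) ∘L S := by rw [ContinuousLinearMap.comp_assoc, hSR]
    rw [this]
    calc ‖(D ∘L S) ∘L S‖ ≤ ‖D ∘L S‖ * ‖S‖ := opNorm_comp_le _ _
      _ ≤ a * (1 / Real.sqrt lam) := by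
          rw [hDS]; exact mul_le_mul_of_nonneg_left hSn ha0
  have hQ : ‖(D ∘L R) ∘L (D ∘L RN)‖ ≤ a * (a * (1 / lam)) := by
    have he : (D ∘L R) ∘L (D ∘L RN) = (D ∘L S) ∘L ((S ∘L D) ∘L RN) := by
      rw [← hSR]
      simp only [ContinuousLinearMap.comp_assoc]
    rw [he]
    have hb1 : ‖(S ∘L D) ∘L RN‖ ≤ a * (1 / lam) :=
      le_trans (opNorm_comp_le _ _) (mul_le_mul_of_nonneg_left hRNn ha0)
    calc ‖(D ∘L S) ∘L ((S ∘L D) ∘L RN)‖ ≤ ‖D ∘L S‖ * ‖(S ∘L D) ∘L RN‖ := opNorm_comp_le _ _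
      _ ≤ a * (a * (1 / lam)) := by
          rw [hDS]; exact mul_le_mul_of_nonneg_left hb1 ha0
  have htot : ‖B ∘L RN‖ ≤ 1 + a * (1 / Real.sqrt lam) + a * (a * (1 / lam)) := by
    rw [key]
    calc ‖1 + D ∘L R + (D ∘L R) ∘L (D ∘L RN)‖
        ≤ ‖(1 : H →L[ℝ] H) + D ∘L R‖ + ‖(D ∘L R) ∘L (D ∘L RN)‖ := norm_add_le _ _
      _ ≤ ‖(1 : H →L[ℝ] H)‖ + ‖D ∘L R‖ + ‖(D ∘L R) ∘L (D ∘L RN)‖ := by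
          have := norm_add_le (1 : H →L[ℝ] H) (D ∘L R); linarith
      _ ≤ 1 + a * (1 / Real.sqrt lam) + a * (a * (1 / lam)) := by
          have h1n : ‖(1 : H →L[ℝ] H)‖ ≤ 1 := by
            rw [ContinuousLinearMap.one_def]; exact ContinuousLinearMap.norm_id_le
          linarith
  calc ‖B ∘L RN‖ ≤ 1 + a * (1 / Real.sqrt lam) + a * (a * (1 / lam)) := htot
    _ = (1 / lam) * a ^ 2 + (1 / Real.sqrt lam) * a + 1 := by ring
end
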